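/- Let G be a linear influence game with player set V, weights w and thresholds b, and suppose V is partitioned into pairwise disjoint nonempty sets S, V_1, …, V_k (k ≥ 2) such that w_{uv} = 0 whenever u ∈ V_p and v ∈ V_q with p ≠ q (i.e., S is a vertex separator). For each p, define the linear influence game G_p' on player set V_p ∪ S whose weights are those of G restricted to pairs in V_p ∪ S, except that every weight into a node of S is set to 0, and whose thresholds are b_j for j ∈ V_p and 0 for j ∈ S (so each node of S is indifferent in G_p'). Then for every pure-strategy Nash equilibrium x of G and every p ∈ {1, …, k}, the restriction of x to V_p ∪ S is a pure-strategy Nash equilibrium of G_p'. -/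

import Mathlib

/-!
In `G'_p` a node of `S` has payoff identically `0`. A node `v ∈ V_p` keeps its threshold, and
its influence sum is unchanged: by the separator property every `u` outside `V_p ∪ S` has
`w u v = 0`.
-/

open Finset

lemma Finset.sum_filter_eq_sum_univ_filter_of_eq_zero {α M : Type*} [Fintype α]
    [AddCommMonoid M] (T : Finset α) (q : α → Prop) [DecidablePred q] (f : α → M)
    (hf : ∀ a ∉ T, f a = 0) :
    ∑ a ∈ T.filter q, f a = ∑ a ∈ univ.filter q, f a :=
  sum_subset (filter_subset_filter q (subset_univ T)) fun a haq ha =>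
    hf a fun haT => ha (mem_filter.2 ⟨haT, (mem_filter.1 haq).2⟩)

lemma weight_eq_zero_of_notMem_union_separator {V : Type*} [Fintype V] [DecidableEq V]
    {k : ℕ} (w : V → V → ℝ) (S : Finset V) (Vp : Fin k → Finset V)
    (hcover : S ∪ univ.biUnion Vp = univ)
    (hsep : ∀ p q : Fin k, p ≠ q → ∀ u ∈ Vp p, ∀ v ∈ Vp q, w u v = 0)
    {p : Fin k} {v : V} (hv : v ∈ Vp p) {u : V} (hu : u ∉ Vp p ∪ S) : w u v = 0 := by
  obtain ⟨huP, huS⟩ : u ∉ Vp p ∧ u ∉ S := by simpa [not_or] using hu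
  have hu_cover : u ∈ S ∪ univ.biUnion Vp := hcover ▸ mem_univ u
  obtain ⟨q, -, huq⟩ := mem_biUnion.1 ((mem_union.1 hu_cover).resolve_left huS)
  exact hsep q p (by rintro rfl; exact huP huq) u huq v hv

theorem lig_separator_restriction_psne (V : Type*) [Fintype V] [DecidableEq V]
    (w : V → V → ℝ) (b : V → ℝ) (k : ℕ)
    (S : Finset V) (Vp : Fin k → Finset V)
    (hcover : S ∪ Finset.univ.biUnion Vp = Finset.univ)
    (hsep : ∀ p q : Fin k, p ≠ q → ∀ u ∈ Vp p, ∀ v ∈ Vp q, w u v = 0)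
    (x : V → ℝ)
    (hPSNE : ∀ v, x v * ((∑ u ∈ univ.filter (· ≠ v), w u v * x u) - b v) ≥ 0)
    (p : Fin k) :
    ∀ v ∈ Vp p ∪ S,
      x v * ((∑ u ∈ (Vp p ∪ S).filter (· ≠ v),
          (if v ∈ S then 0 else w u v) * x u)
        - (if v ∈ S then 0 else b v)) ≥ 0 := by
  intro v hv
  by_cases hvS : v ∈ S
  · simp [hvS]
  have hvP : v ∈ Vp p := (mem_union.1 hv).resolve_right hvS
  have hsum : ∑ u ∈ (Vp p ∪ S).filter (· ≠ v), w u v * x u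
      = ∑ u ∈ univ.filter (· ≠ v), w u v * x u :=
    sum_filter_eq_sum_univ_filter_of_eq_zero _ _ _ fun u hu => by
      rw [weight_eq_zero_of_notMem_union_separator w S Vp hcover hsep hvP hu, zero_mul]
  simpa only [hvS, if_false, hsum] using hPSNE v
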